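/- Let z > 0 be real and let w₁, w₂ ∈ ℂ be such that ν = (w₁ − w₂)/z is not an integer. If I: (0,∞) → ℂ is twice differentiable and satisfies z²q²I''(q) + z²qI'(q) − (w₁+w₂)zqI'(q) + w₁w₂I(q) = qI(q) for all q > 0, then there exist constants c₁, c₂ ∈ ℂ such that I(q) = q^{(w₁+w₂)/(2z)}·(c₁·I_{ν}(2√q/z) + c₂·I_{−ν}(2√q/z)) for all q > 0. -/

import Mathlib

/-- The modified Bessel function of the first kind `I_α(x)`, for `α ∈ ℂ` and real `x`,
defined via its power series; terms where `Γ` hits a pole vanish since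
Mathlib's `Complex.Gamma` is `0` at the poles (so `1/Γ = 0` there). -/
noncomputable def besselI (α : ℂ) (x : ℝ) : ℂ :=
  ∑' m : ℕ, (1 / ((Nat.factorial m : ℂ) * Complex.Gamma ((m : ℂ) + α + 1))) *
    (((x : ℂ) / 2) ^ (2 * (m : ℂ) + α))

/-!
Writing `I = q ^ a * S` with `(z a - w₁)(z a - w₂) = 0` turns the QDE into
`z² (q S'' + (1 + α) S') = S`, where `z α = 2 z a - (w₁ + w₂) = ±(w₁ - w₂)`. This reduced equation
has the entire solution `S = ∑ q ^ m / (m! Γ(m + α + 1) z ^ (2m))`, which is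
`q ^ (-α/2) z ^ α I_α(2 √q / z)`. For `α = ±ν` the two Frobenius solutions have Wronskian
`q ^ (a₁ + a₂ - 1) ((a₂ - a₁) S₁ S₂ + O(q))` with `a₂ - a₁ = -ν ≠ 0` and `S₁(0) S₂(0) ≠ 0`
(as `±ν` is not a negative integer), so it is nonzero at some small `q₀ > 0`. Matching `I` and `I'`
at `q₀` by a combination of the two solutions, uniqueness for the linear ODE on compact
subintervals of `(0, ∞)` gives equality everywhere.
-/

open Complex Set Filter Topology

noncomputable def powSeries (e : ℕ → ℂ) (x : ℝ) : ℂ := ∑' m, e m * (x : ℂ) ^ m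

def derivCoeff (e : ℕ → ℂ) (m : ℕ) : ℂ := (m + 1) * e (m + 1)

section PowSeries

variable {e : ℕ → ℂ}

theorem summable_norm_mul_pow_of_eq_mul_succ {c : ℕ → ℂ}
    (hc : Tendsto (fun m => ‖c m‖) atTop atTop) (hrec : ∀ m, e m = c m * e (m + 1)) (R : ℝ) :
    Summable fun m => ‖e m‖ * R ^ m := by
  refine summable_of_ratio_norm_eventually_le (r := 1 / 2) (by norm_num) ?_
  filter_upwards [hc.eventually_ge_atTop (2 * |R|)] with m hm
  have hnorm : ‖e m‖ = ‖c m‖ * ‖e (m + 1)‖ := by rw [hrec m, norm_mul]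
  simp only [norm_mul, norm_pow, Real.norm_eq_abs, abs_norm, hnorm, pow_succ]
  have := mul_le_mul_of_nonneg_right hm (by positivity : 0 ≤ ‖e (m + 1)‖ * |R| ^ m)
  linarith

theorem powSeries_zero (e : ℕ → ℂ) : powSeries e 0 = e 0 := by
  rw [powSeries, tsum_eq_single 0 fun m hm => by simp [hm]]
  simp

variable (he : ∀ R : ℝ, Summable fun m => ‖e m‖ * R ^ m)
include he

theorem summable_powSeries (x : ℝ) : Summable fun m => e m * (x : ℂ) ^ m :=
  .of_norm (by simpa [norm_mul, norm_pow] using he |x|)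

theorem summable_norm_derivCoeff_mul_pow (R : ℝ) :
    Summable fun m => ‖derivCoeff e m‖ * R ^ m := by
  refine .of_norm_bounded ((summable_nat_add_iff 1).2 (he (2 * (|R| + 1)))) fun m => ?_
  have h2 : ((m : ℝ) + 1) ≤ 2 ^ (m + 1) := by exact_mod_cast (Nat.lt_two_pow_self).le
  have hR : |R| ^ m ≤ (|R| + 1) ^ (m + 1) :=
    (pow_le_pow_left₀ (abs_nonneg R) (by linarith) m).trans
      (pow_le_pow_right₀ (by linarith [abs_nonneg R]) m.le_succ)
  have hm : ‖((m : ℂ) + 1)‖ = (m : ℝ) + 1 := by exact_mod_cast Complex.norm_natCast (m + 1)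
  rw [norm_mul, norm_norm, norm_pow, Real.norm_eq_abs, derivCoeff, norm_mul, hm, mul_pow]
  calc ((m : ℝ) + 1) * ‖e (m + 1)‖ * |R| ^ m
      ≤ 2 ^ (m + 1) * ‖e (m + 1)‖ * (|R| + 1) ^ (m + 1) := by gcongr
    _ = ‖e (m + 1)‖ * (2 ^ (m + 1) * (|R| + 1) ^ (m + 1)) := by ring

theorem hasDerivAt_powSeries (x : ℝ) :
    HasDerivAt (powSeries e) (powSeries (derivCoeff e) x) x := by
  have hshift : powSeries e = fun y : ℝ => e 0 + ∑' m, e (m + 1) * (y : ℂ) ^ (m + 1) := by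
    funext y
    rw [powSeries, (summable_powSeries he y).tsum_eq_zero_add]
    simp
  set r := |x| + 1
  have hx : x ∈ Ioo (-r) r := abs_lt.1 (show |x| < r by linarith)
  have hterm : ∀ (m : ℕ) (y : ℝ), HasDerivAt (fun y : ℝ => e (m + 1) * (y : ℂ) ^ (m + 1))
      (derivCoeff e m * (y : ℂ) ^ m) y := by
    intro m y
    have := ((hasDerivAt_pow (m + 1) (y : ℂ)).comp_ofReal).const_mul (e (m + 1))
    refine this.congr_deriv ?_
    simp only [derivCoeff, add_tsub_cancel_right]
    push_cast
    ring
  have hbound : ∀ (m : ℕ) (y : ℝ), y ∈ Ioo (-r) r →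
      ‖derivCoeff e m * (y : ℂ) ^ m‖ ≤ ‖derivCoeff e m‖ * r ^ m := by
    intro m y hy
    rw [norm_mul, norm_pow, Complex.norm_real, Real.norm_eq_abs]
    gcongr
    exact (abs_lt.2 hy).le
  have := hasDerivAt_tsum_of_isPreconnected (summable_norm_derivCoeff_mul_pow he r) isOpen_Ioo
    isPreconnected_Ioo (fun m y _ => hterm m y) hbound hx
    ((summable_nat_add_iff 1).2 (summable_powSeries he x)) hx
  rw [hshift]
  exact this.const_add (e 0)

theorem continuous_powSeries : Continuous (powSeries e) :=
  continuous_iff_continuousAt.2 fun x => (hasDerivAt_powSeries he x).continuousAt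

theorem summable_natCast_mul_mul_pow (x : ℝ) :
    Summable fun m : ℕ => (m : ℂ) * e m * (x : ℂ) ^ m := by
  refine (summable_nat_add_iff 1).1 (((summable_powSeries
    (summable_norm_derivCoeff_mul_pow he) x).mul_left (x : ℂ)).congr fun m => ?_)
  simp only [derivCoeff]
  push_cast
  ring

theorem mul_powSeries_derivCoeff (x : ℝ) :
    x * powSeries (derivCoeff e) x = powSeries (fun m : ℕ => (m : ℂ) * e m) x := by
  rw [powSeries, powSeries, (summable_natCast_mul_mul_pow he x).tsum_eq_zero_add,
    ← tsum_mul_left]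
  simp only [derivCoeff]
  push_cast
  simp only [zero_mul, zero_add]
  exact tsum_congr fun m => by ring

theorem powSeries_eq_of_recurrence {c α : ℂ}
    (hrec : ∀ m : ℕ, e m = c * ((m + 1) * (m + 1 + α)) * e (m + 1)) (x : ℝ) :
    powSeries e x = c * (x * powSeries (derivCoeff (derivCoeff e)) x +
      (1 + α) * powSeries (derivCoeff e) x) := by
  have hd := summable_norm_derivCoeff_mul_pow he
  rw [mul_powSeries_derivCoeff hd, powSeries, powSeries, powSeries, ← tsum_mul_left,
    ← (summable_natCast_mul_mul_pow hd x).tsum_add ((summable_powSeries hd x).mul_left _),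
    ← tsum_mul_left]
  refine tsum_congr fun m => ?_
  rw [hrec m]
  simp only [derivCoeff]
  ring

end PowSeries

def SolvesQDE (z : ℝ) (w₁ w₂ : ℂ) (X X' : ℝ → ℂ) : Prop :=
  ∀ q : ℝ, 0 < q → HasDerivAt X (X' q) q ∧ ∃ X'' : ℂ, HasDerivAt X' X'' q ∧
    (z : ℂ) ^ 2 * (q : ℂ) ^ 2 * X'' + (z : ℂ) ^ 2 * (q : ℂ) * X' q -
      (w₁ + w₂) * (z : ℂ) * (q : ℂ) * X' q + w₁ * w₂ * X q = (q : ℂ) * X q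

theorem ofReal_cpow_eq_cpow_sub_one_mul {q : ℝ} (hq : 0 < q) (a : ℂ) :
    (q : ℂ) ^ a = (q : ℂ) ^ (a - 1) * q := by
  conv_lhs => rw [← sub_add_cancel a 1, cpow_add _ _ (ofReal_ne_zero.2 hq.ne'), cpow_one]

theorem hasDerivAt_ofReal_cpow_mul {T : ℝ → ℂ} {T' : ℂ} {q : ℝ} (hq : 0 < q) (a : ℂ)
    (hT : HasDerivAt T T' q) :
    HasDerivAt (fun t : ℝ => (t : ℂ) ^ a * T t) ((q : ℂ) ^ (a - 1) * (a * T q + q * T')) q := by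
  have hpow : HasDerivAt (fun t : ℝ => (t : ℂ) ^ a) (a * (q : ℂ) ^ (a - 1)) q := by
    simpa using ((hasDerivAt_id (q : ℂ)).cpow_const (ofReal_mem_slitPlane.2 hq)).comp_ofReal
  refine (hpow.mul hT).congr_deriv ?_
  rw [ofReal_cpow_eq_cpow_sub_one_mul hq a]
  ring

theorem solvesQDE_cpow_mul {z : ℝ} {w₁ w₂ a α : ℂ} (ha : 2 * z * a = w₁ + w₂ + z * α)
    (hα : ((z : ℂ) * α) ^ 2 = (w₁ - w₂) ^ 2) {S S' S'' : ℝ → ℂ}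
    (hS : ∀ q, 0 < q → HasDerivAt S (S' q) q) (hS' : ∀ q, 0 < q → HasDerivAt S' (S'' q) q)
    (hred : ∀ q, 0 < q → (z : ℂ) ^ 2 * (q * S'' q + (1 + α) * S' q) = S q) :
    SolvesQDE z w₁ w₂ (fun q => (q : ℂ) ^ a * S q)
      (fun q => (q : ℂ) ^ (a - 1) * (a * S q + q * S' q)) := by
  intro q hq
  have hT : HasDerivAt (fun t : ℝ => a * S t + t * S' t) (a * S' q + (S' q + q * S'' q)) q := by
    refine ((hS q hq).const_mul a).add
      (((hasDerivAt_id q).ofReal_comp.mul (hS' q hq)).congr_deriv ?_)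
    simp
  refine ⟨hasDerivAt_ofReal_cpow_mul hq a (hS q hq), _, hasDerivAt_ofReal_cpow_mul hq _ hT, ?_⟩
  have hindicial : ((z : ℂ) * a - w₁) * ((z : ℂ) * a - w₂) = 0 := by
    linear_combination (2 * z * a - w₁ - w₂ + z * α) / 4 * ha + hα / 4
  beta_reduce
  rw [ofReal_cpow_eq_cpow_sub_one_mul hq a, ofReal_cpow_eq_cpow_sub_one_mul hq (a - 1)]
  linear_combination (q : ℂ) ^ (a - 1 - 1) * (q : ℂ) ^ 2 *
    (S q * hindicial + q * hred q hq + z * q * S' q * ha)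

theorem lipschitzWith_companion {A B : ℂ} {M : ℝ} (hA : ‖A‖ ≤ M) (hB : ‖B‖ ≤ M) :
    LipschitzWith (Real.toNNReal (1 + 2 * M)) fun x : ℂ × ℂ => (x.2, A * x.1 + B * x.2) := by
  have hM : 0 ≤ M := (norm_nonneg A).trans hA
  refine LipschitzWith.of_dist_le_mul fun x y => ?_
  rw [Real.coe_toNNReal _ (by positivity)]
  have h₁ : dist x.1 y.1 ≤ dist x y := by rw [Prod.dist_eq]; exact le_max_left _ _
  have h₂ : dist x.2 y.2 ≤ dist x y := by rw [Prod.dist_eq]; exact le_max_right _ _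
  have hlin : dist (A * x.1 + B * x.2) (A * y.1 + B * y.2) ≤ M * dist x y + M * dist x y := by
    rw [dist_eq_norm, show A * x.1 + B * x.2 - (A * y.1 + B * y.2)
      = A * (x.1 - y.1) + B * (x.2 - y.2) by ring]
    refine (norm_add_le _ _).trans ?_
    rw [norm_mul, norm_mul, ← dist_eq_norm, ← dist_eq_norm]
    gcongr
  rw [Prod.dist_eq]
  dsimp only
  exact max_le (by nlinarith [dist_nonneg (x := x) (y := y)])
    (by linarith [dist_nonneg (x := x) (y := y)])

theorem linearODE_solution_unique_of_mem_Ioo {A B : ℝ → ℂ} {a b M : ℝ}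
    (hA : ∀ t ∈ Ioo a b, ‖A t‖ ≤ M) (hB : ∀ t ∈ Ioo a b, ‖B t‖ ≤ M) {X X' Y Y' : ℝ → ℂ}
    (hX : ∀ t ∈ Ioo a b, HasDerivAt X (X' t) t ∧ HasDerivAt X' (A t * X t + B t * X' t) t)
    (hY : ∀ t ∈ Ioo a b, HasDerivAt Y (Y' t) t ∧ HasDerivAt Y' (A t * Y t + B t * Y' t) t)
    {t₀ : ℝ} (ht₀ : t₀ ∈ Ioo a b) (h₀ : X t₀ = Y t₀) (h₀' : X' t₀ = Y' t₀) :
    EqOn X Y (Ioo a b) := fun t ht =>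
  congrArg Prod.fst <| ODE_solution_unique_of_mem_Ioo (s := fun _ => univ)
    (v := fun t x => (x.2, A t * x.1 + B t * x.2))
    (fun t ht => (lipschitzWith_companion (hA t ht) (hB t ht)).lipschitzOnWith) ht₀
    (fun t ht => ⟨(hX t ht).1.prodMk (hX t ht).2, mem_univ _⟩)
    (fun t ht => ⟨(hY t ht).1.prodMk (hY t ht).2, mem_univ _⟩) (by rw [h₀, h₀']) ht

theorem linearODE_solution_unique_of_mem_Ioi {A B : ℝ → ℂ} {a : ℝ}
    (hA : ContinuousOn A (Ioi a)) (hB : ContinuousOn B (Ioi a)) {X X' Y Y' : ℝ → ℂ}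
    (hX : ∀ t ∈ Ioi a, HasDerivAt X (X' t) t ∧ HasDerivAt X' (A t * X t + B t * X' t) t)
    (hY : ∀ t ∈ Ioi a, HasDerivAt Y (Y' t) t ∧ HasDerivAt Y' (A t * Y t + B t * Y' t) t)
    {t₀ : ℝ} (ht₀ : t₀ ∈ Ioi a) (h₀ : X t₀ = Y t₀) (h₀' : X' t₀ = Y' t₀) :
    EqOn X Y (Ioi a) := by
  intro t ht
  obtain ⟨c, hac, hc⟩ := exists_between (lt_min (mem_Ioi.1 ht) (mem_Ioi.1 ht₀))
  set d := max t t₀ + 1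
  have hsub : Icc c d ⊆ Ioi a := fun s hs => hac.trans_le hs.1
  have hsub' : Ioo c d ⊆ Ioi a := Ioo_subset_Icc_self.trans hsub
  obtain ⟨MA, hMA⟩ := isCompact_Icc.exists_bound_of_continuousOn (hA.mono hsub)
  obtain ⟨MB, hMB⟩ := isCompact_Icc.exists_bound_of_continuousOn (hB.mono hsub)
  have hmem : ∀ s, min t t₀ ≤ s → s ≤ max t t₀ → s ∈ Ioo c d := fun s h₁ h₂ =>
    ⟨hc.trans_le h₁, by linarith⟩
  refine linearODE_solution_unique_of_mem_Ioo (M := max MA MB)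
    (fun s hs => (hMA s (Ioo_subset_Icc_self hs)).trans (le_max_left _ _))
    (fun s hs => (hMB s (Ioo_subset_Icc_self hs)).trans (le_max_right _ _))
    (fun s hs => hX s (hsub' hs)) (fun s hs => hY s (hsub' hs))
    (hmem t₀ (min_le_right _ _) (le_max_right _ _)) h₀ h₀'
    (hmem t (min_le_left _ _) (le_max_left _ _))

namespace SolvesQDE

variable {z : ℝ} {w₁ w₂ : ℂ} {X X' Y Y' : ℝ → ℂ}

theorem const_mul_add (hX : SolvesQDE z w₁ w₂ X X') (hY : SolvesQDE z w₁ w₂ Y Y') (c₁ c₂ : ℂ) :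
    SolvesQDE z w₁ w₂ (fun q => c₁ * X q + c₂ * Y q) (fun q => c₁ * X' q + c₂ * Y' q) := by
  intro q hq
  obtain ⟨hX₁, X'', hX₂, hXq⟩ := hX q hq
  obtain ⟨hY₁, Y'', hY₂, hYq⟩ := hY q hq
  exact ⟨(hX₁.const_mul c₁).add (hY₁.const_mul c₂), c₁ * X'' + c₂ * Y'',
    (hX₂.const_mul c₁).add (hY₂.const_mul c₂), by linear_combination c₁ * hXq + c₂ * hYq⟩

theorem eqOn (hz : z ≠ 0) (hX : SolvesQDE z w₁ w₂ X X') (hY : SolvesQDE z w₁ w₂ Y Y') {q₀ : ℝ}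
    (hq₀ : 0 < q₀) (h₀ : X q₀ = Y q₀) (h₀' : X' q₀ = Y' q₀) : EqOn X Y (Ioi 0) := by
  have hzC : (z : ℂ) ≠ 0 := ofReal_ne_zero.2 hz
  set A : ℝ → ℂ := fun t => ((t : ℂ) - w₁ * w₂) / ((z : ℂ) ^ 2 * (t : ℂ) ^ 2)
  set B : ℝ → ℂ := fun t => ((w₁ + w₂) - z) / ((z : ℂ) * t)
  have hnormal : ∀ {W W' : ℝ → ℂ}, SolvesQDE z w₁ w₂ W W' → ∀ t ∈ Ioi (0 : ℝ),
      HasDerivAt W (W' t) t ∧ HasDerivAt W' (A t * W t + B t * W' t) t := by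
    intro W W' hW t ht
    obtain ⟨hW₁, W'', hW₂, hWt⟩ := hW t ht
    have htC : (t : ℂ) ≠ 0 := ofReal_ne_zero.2 (ne_of_gt ht)
    refine ⟨hW₁, hW₂.congr_deriv ?_⟩
    simp only [A, B]
    field_simp
    linear_combination hWt
  have ht0 : ∀ t ∈ Ioi (0 : ℝ), (t : ℂ) ≠ 0 := fun t ht => ofReal_ne_zero.2 (ne_of_gt ht)
  exact linearODE_solution_unique_of_mem_Ioi
    (ContinuousOn.div (by fun_prop) (by fun_prop) fun t ht => by simp [hzC, ht0 t ht])
    (ContinuousOn.div (by fun_prop) (by fun_prop) fun t ht => by simp [hzC, ht0 t ht])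
    (hnormal hX) (hnormal hY) hq₀ h₀ h₀'

end SolvesQDE



theorem exists_eq_mul_add_mul_of_det_ne_zero {K : Type*} [Field K] {u₁ u₂ v₁ v₂ : K}
    (h : u₁ * v₂ - v₁ * u₂ ≠ 0) (y y' : K) :
    ∃ c₁ c₂ : K, y = c₁ * u₁ + c₂ * u₂ ∧ y' = c₁ * v₁ + c₂ * v₂ :=
  ⟨(y * v₂ - y' * u₂) / (u₁ * v₂ - v₁ * u₂), (y' * u₁ - y * v₁) / (u₁ * v₂ - v₁ * u₂),
    by rw [div_mul_eq_mul_div, div_mul_eq_mul_div, ← add_div, eq_div_iff h]; ring,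
    by rw [div_mul_eq_mul_div, div_mul_eq_mul_div, ← add_div, eq_div_iff h]; ring⟩

theorem exists_pos_wronskian_ne_zero {a₁ a₂ : ℂ} (ha : a₁ ≠ a₂) {S₁ S₁' S₂ S₂' : ℝ → ℂ}
    (hS₁ : ContinuousAt S₁ 0) (hS₁' : ContinuousAt S₁' 0) (hS₂ : ContinuousAt S₂ 0)
    (hS₂' : ContinuousAt S₂' 0) (h₁ : S₁ 0 ≠ 0) (h₂ : S₂ 0 ≠ 0) :
    ∃ q : ℝ, 0 < q ∧ (q : ℂ) ^ a₁ * S₁ q * ((q : ℂ) ^ (a₂ - 1) * (a₂ * S₂ q + q * S₂' q)) -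
      (q : ℂ) ^ (a₁ - 1) * (a₁ * S₁ q + q * S₁' q) * ((q : ℂ) ^ a₂ * S₂ q) ≠ 0 := by
  set g : ℝ → ℂ := fun q => (a₂ - a₁) * S₁ q * S₂ q + q * (S₁ q * S₂' q - S₁' q * S₂ q)
  have hg : ContinuousAt g 0 := by fun_prop
  have hg0 : g 0 ≠ 0 := by
    simpa [g] using mul_ne_zero (mul_ne_zero (sub_ne_zero.2 ha.symm) h₁) h₂
  obtain ⟨q, hgq, hq⟩ :=
    (((hg.eventually_ne hg0).filter_mono nhdsWithin_le_nhds).and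
      (self_mem_nhdsWithin (s := Ioi (0 : ℝ)))).exists
  refine ⟨q, hq, ?_⟩
  have hW : (q : ℂ) ^ a₁ * S₁ q * ((q : ℂ) ^ (a₂ - 1) * (a₂ * S₂ q + q * S₂' q)) -
      (q : ℂ) ^ (a₁ - 1) * (a₁ * S₁ q + q * S₁' q) * ((q : ℂ) ^ a₂ * S₂ q) =
      (q : ℂ) ^ (a₁ - 1) * (q : ℂ) ^ (a₂ - 1) * q * g q := by
    rw [ofReal_cpow_eq_cpow_sub_one_mul hq a₁, ofReal_cpow_eq_cpow_sub_one_mul hq a₂]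
    ring
  rw [hW]
  have hq0 : (q : ℂ) ≠ 0 := ofReal_ne_zero.2 (ne_of_gt hq)
  exact mul_ne_zero (mul_ne_zero (mul_ne_zero (by simp [hq0]) (by simp [hq0])) hq0) hgq

noncomputable def besselCoeff (z : ℝ) (α : ℂ) (m : ℕ) : ℂ :=
  ((m.factorial : ℂ) * Gamma (m + α + 1) * (z : ℂ) ^ (2 * m))⁻¹

theorem natCast_add_add_one_ne_zero_of_ne_intCast {α : ℂ} (hα : ∀ n : ℤ, α ≠ n) (m : ℕ) :
    (m : ℂ) + α + 1 ≠ 0 :=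
  fun h => hα (-(m + 1)) (by push_cast; linear_combination h)

section BesselCoeff

variable {z : ℝ} {α : ℂ} (hα : ∀ m : ℕ, (m : ℂ) + α + 1 ≠ 0)
include hα

theorem Gamma_natCast_add_add_one_ne_zero (m : ℕ) : Gamma (m + α + 1) ≠ 0 :=
  Gamma_ne_zero fun n hn => hα (n + m) (by push_cast; linear_combination hn)

theorem besselCoeff_zero_ne_zero : besselCoeff z α 0 ≠ 0 := by
  simpa [besselCoeff] using Gamma_natCast_add_add_one_ne_zero hα 0

variable (hz : z ≠ 0)
include hz

theorem besselCoeff_eq_mul_succ (m : ℕ) :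
    besselCoeff z α m = (z : ℂ) ^ 2 * ((m + 1) * (m + 1 + α)) * besselCoeff z α (m + 1) := by
  have hΓ : Gamma ((m + 1 : ℕ) + α + 1) = (m + α + 1) * Gamma (m + α + 1) := by
    rw [show ((m + 1 : ℕ) : ℂ) + α + 1 = (m + α + 1) + 1 by push_cast; ring,
      Gamma_add_one _ (hα m)]
  have := Gamma_natCast_add_add_one_ne_zero hα m
  have := hα m
  have hzC : (z : ℂ) ≠ 0 := ofReal_ne_zero.2 hz
  simp only [besselCoeff, hΓ, Nat.factorial_succ]
  push_cast
  field_simp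
  ring

theorem summable_norm_besselCoeff_mul_pow (R : ℝ) :
    Summable fun m => ‖besselCoeff z α m‖ * R ^ m := by
  refine summable_norm_mul_pow_of_eq_mul_succ ?_ (besselCoeff_eq_mul_succ hα hz) R
  have hz2 : 0 < z ^ 2 := by positivity
  refine tendsto_atTop_mono (f := fun m : ℕ => z ^ 2 * ((m : ℝ) + -‖1 + α‖)) (fun m => ?_)
    ((tendsto_atTop_add_const_right _ _ tendsto_natCast_atTop_atTop).const_mul_atTop hz2)
  have hlow : (m : ℝ) + -‖1 + α‖ ≤ ‖(m : ℂ) + 1 + α‖ := by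
    have := norm_sub_norm_le (m : ℂ) (-(1 + α))
    rwa [norm_neg, sub_neg_eq_add, Complex.norm_natCast, ← add_assoc] at this
  have hm : ‖(m : ℂ) + 1‖ = (m : ℝ) + 1 := by exact_mod_cast Complex.norm_natCast (m + 1)
  rw [norm_mul, norm_mul, norm_pow, Complex.norm_real, Real.norm_eq_abs, sq_abs, hm]
  have : ‖(m : ℂ) + 1 + α‖ ≤ ((m : ℝ) + 1) * ‖(m : ℂ) + 1 + α‖ :=
    le_mul_of_one_le_left (norm_nonneg _) (by linarith [(m.cast_nonneg : (0 : ℝ) ≤ m)])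
  gcongr
  linarith

end BesselCoeff

theorem ofReal_sqrt_cpow {q : ℝ} (hq : 0 ≤ q) (α : ℂ) : (√q : ℂ) ^ α = (q : ℂ) ^ (α / 2) := by
  rw [Real.sqrt_eq_rpow, ← cpow_mul_ofReal_nonneg hq]
  congr 1
  push_cast
  ring

theorem besselI_two_mul_sqrt_div (α : ℂ) {z q : ℝ} (hz : 0 < z) (hq : 0 < q) :
    besselI α (2 * √q / z) = (q : ℂ) ^ (α / 2) / (z : ℂ) ^ α * powSeries (besselCoeff z α) q := by
  have hx : ((2 * √q / z : ℝ) : ℂ) / 2 = ((√q / z : ℝ) : ℂ) := by push_cast; ring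
  have hx0 : ((√q / z : ℝ) : ℂ) ≠ 0 := ofReal_ne_zero.2 (div_pos (Real.sqrt_pos.2 hq) hz).ne'
  rw [besselI, powSeries, ← tsum_mul_left]
  refine tsum_congr fun m => ?_
  rw [hx, show 2 * (m : ℂ) + α = ((2 * m : ℕ) : ℂ) + α by push_cast; ring, cpow_add _ _ hx0,
    cpow_natCast, ofReal_div, div_cpow_ofReal_nonneg (Real.sqrt_nonneg q) hz.le,
    ofReal_sqrt_cpow hq.le, pow_mul, div_pow, ← ofReal_pow, Real.sq_sqrt hq.le, besselCoeff]
  ring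

theorem solvesQDE_cpow_mul_powSeries_besselCoeff {z : ℝ} (hz : z ≠ 0) {w₁ w₂ a α : ℂ}
    (ha : 2 * z * a = w₁ + w₂ + z * α) (hα : ((z : ℂ) * α) ^ 2 = (w₁ - w₂) ^ 2)
    (hαn : ∀ m : ℕ, (m : ℂ) + α + 1 ≠ 0) :
    SolvesQDE z w₁ w₂ (fun q => (q : ℂ) ^ a * powSeries (besselCoeff z α) q)
      (fun q => (q : ℂ) ^ (a - 1) * (a * powSeries (besselCoeff z α) q +
        q * powSeries (derivCoeff (besselCoeff z α)) q)) :=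
  have he := summable_norm_besselCoeff_mul_pow hαn hz
  solvesQDE_cpow_mul ha hα (fun q _ => hasDerivAt_powSeries he q)
    (fun q _ => hasDerivAt_powSeries (summable_norm_derivCoeff_mul_pow he) q)
    (fun q _ => (powSeries_eq_of_recurrence he (besselCoeff_eq_mul_succ hαn hz) q).symm)

theorem qde_solution_eq_bessel_combination (z : ℝ) (hz : 0 < z) (w₁ w₂ ν : ℂ)
    (hν : ν = (w₁ - w₂) / (z : ℂ)) (hnint : ∀ n : ℤ, ν ≠ (n : ℂ))
    (Ifun : ℝ → ℂ)
    (hI₁ : ∀ q ∈ Set.Ioi (0 : ℝ), DifferentiableAt ℝ Ifun q)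
    (hI₂ : ∀ q ∈ Set.Ioi (0 : ℝ), DifferentiableAt ℝ (deriv Ifun) q)
    (hqde : ∀ q : ℝ, 0 < q →
      (z : ℂ) ^ 2 * (q : ℂ) ^ 2 * deriv (deriv Ifun) q +
        (z : ℂ) ^ 2 * (q : ℂ) * deriv Ifun q -
        (w₁ + w₂) * (z : ℂ) * (q : ℂ) * deriv Ifun q +
        w₁ * w₂ * Ifun q = (q : ℂ) * Ifun q) :
    ∃ c₁ c₂ : ℂ, ∀ q : ℝ, 0 < q →
      Ifun q = (q : ℂ) ^ ((w₁ + w₂) / (2 * (z : ℂ))) *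
        (c₁ * besselI ν (2 * Real.sqrt q / z) + c₂ * besselI (-ν) (2 * Real.sqrt q / z)) := by
  have hzC : (z : ℂ) ≠ 0 := ofReal_ne_zero.2 hz.ne'
  have hzν : (z : ℂ) * ν = w₁ - w₂ := by rw [hν]; field_simp
  have hν₁ := natCast_add_add_one_ne_zero_of_ne_intCast hnint
  have hν₂ := natCast_add_add_one_ne_zero_of_ne_intCast (α := -ν)
    fun n h => hnint (-n) (by push_cast; linear_combination -h)
  have he₁ := summable_norm_besselCoeff_mul_pow hν₁ hz.ne'
  have he₂ := summable_norm_besselCoeff_mul_pow hν₂ hz.ne'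
  set s := (w₁ + w₂) / (2 * (z : ℂ))
  have hF₁ := solvesQDE_cpow_mul_powSeries_besselCoeff hz.ne' (w₁ := w₁) (w₂ := w₂)
    (a := s + ν / 2) (by simp only [s]; field_simp) (by rw [hzν]) hν₁
  have hF₂ := solvesQDE_cpow_mul_powSeries_besselCoeff hz.ne' (w₁ := w₁) (w₂ := w₂)
    (a := s + -ν / 2) (by simp only [s]; field_simp) (by rw [mul_neg, neg_sq, hzν]) hν₂
  obtain ⟨q₀, hq₀, hW⟩ := exists_pos_wronskian_ne_zero (a₁ := s + ν / 2) (a₂ := s + -ν / 2)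
    (fun h => hnint 0 (by push_cast; linear_combination h)) (continuous_powSeries he₁).continuousAt
    (continuous_powSeries (summable_norm_derivCoeff_mul_pow he₁)).continuousAt
    (continuous_powSeries he₂).continuousAt
    (continuous_powSeries (summable_norm_derivCoeff_mul_pow he₂)).continuousAt
    (by rw [powSeries_zero]; exact besselCoeff_zero_ne_zero hν₁)
    (by rw [powSeries_zero]; exact besselCoeff_zero_ne_zero hν₂)
  obtain ⟨c₁, c₂, h₀, h₀'⟩ := exists_eq_mul_add_mul_of_det_ne_zero hW (Ifun q₀) (deriv Ifun q₀)
  have hI : SolvesQDE z w₁ w₂ Ifun (deriv Ifun) := fun q hq =>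
    ⟨(hI₁ q hq).hasDerivAt, _, (hI₂ q hq).hasDerivAt, hqde q hq⟩
  have hIG := hI.eqOn hz.ne' (hF₁.const_mul_add hF₂ c₁ c₂) hq₀ h₀ h₀'
  refine ⟨c₁ * (z : ℂ) ^ ν, c₂ * (z : ℂ) ^ (-ν), fun q hq => ?_⟩
  have hq0 : (q : ℂ) ≠ 0 := ofReal_ne_zero.2 hq.ne'
  have hzν0 : (z : ℂ) ^ ν ≠ 0 := by simp [hzC]
  rw [hIG hq]
  beta_reduce
  rw [besselI_two_mul_sqrt_div ν hz hq, besselI_two_mul_sqrt_div (-ν) hz hq,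
    cpow_add _ _ hq0, cpow_add _ _ hq0, cpow_neg]
  field_simp
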